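/- arXiv:1908.03659 — 3 statements merged into one kernel-verified Lean document; each statement's English description precedes it below -/
import Mathlib

section
/- In the uniform attachment graph $G_{n,k}$, let $X = \{n-m+1, \dots, n\}$ be the set of the $m$ largest vertices, where $2m \le n$. Then $\mathbb{P}(|N(X)| < m) \le \binom{n-m}{m-1} \left( \frac{(2m)_m}{(n)_m} \right)^k$, where $(a)_j = a(a-1)\cdots(a-j+1)$ denotes the falling factorial. -/
open Finset
open scoped Classical

/-- The set of valid choice sequences for the uniform attachment graph on `n`
vertices (labelled `0, …, n-1`, corresponding to `1, …, n` in the paper): each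
vertex `j ≥ 1` makes `k` choices among the earlier vertices `0, …, j-1`
(vertex `0` is forced to the dummy value `0`, which creates no edge). -/
noncomputable def UAValid (n k : ℕ) : Finset (Fin n → Fin k → Fin n) :=
  Finset.univ.filter (fun z => ∀ j i, (z j i : ℕ) < max (j : ℕ) 1)

/-- The uniform attachment graph determined by a choice sequence `z`:
`u` and `v` are adjacent iff one of them chose the other. -/
noncomputable def UAGraph (n k : ℕ) (z : Fin n → Fin k → Fin n) :
    SimpleGraph (Fin n) :=
  SimpleGraph.fromRel (fun u v => (u : ℕ) < v ∧ ∃ i, z v i = u)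

/-- The probability of an event `E` for the uniform attachment graph `G_{n,k}`,
with all valid choice sequences equally likely. -/
noncomputable def UAProb (n k : ℕ) (E : (Fin n → Fin k → Fin n) → Prop) : ℝ :=
  ((UAValid n k).filter E).card / (UAValid n k).card

/-- The external neighborhood `N(X)` of a vertex set `X`. -/
noncomputable def extNbhd {V : Type*} [Fintype V] (G : SimpleGraph V)
    (X : Finset V) : Finset V :=
  Finset.univ.filter (fun u => u ∉ X ∧ ∃ x ∈ X, G.Adj x u)

/-- The set of the `m` largest vertices. -/
noncomputable def topSet (n m : ℕ) : Finset (Fin n) :=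
  Finset.univ.filter (fun v => n - m ≤ (v : ℕ))

lemma card_filter_lt_fin (n c : ℕ) (hc : c ≤ n) :
    (univ.filter fun v : Fin n => (v : ℕ) < c).card = c := by
  have h : (univ.filter fun v : Fin n => (v : ℕ) < c)
      = (range c).attachFin (fun x hx => lt_of_lt_of_le (mem_range.mp hx) hc) := by
    ext v; simp
  rw [h, Finset.card_attachFin, card_range]

lemma card_filter_Ico_fin (n a b : ℕ) (hb : b ≤ n) :
    (univ.filter fun v : Fin n => a ≤ (v : ℕ) ∧ (v : ℕ) < b).card = b - a := by
  have h : (univ.filter fun v : Fin n => a ≤ (v : ℕ) ∧ (v : ℕ) < b)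
      = (Finset.Ico a b).attachFin (fun x hx => lt_of_lt_of_le (mem_Ico.mp hx).2 hb) := by
    ext v; simp
  rw [h, Finset.card_attachFin, Nat.card_Ico]

lemma count_pointwise (n k : ℕ) (A : Fin n → Finset (Fin n)) :
    (univ.filter fun z : Fin n → Fin k → Fin n => ∀ j i, z j i ∈ A j).card
      = ∏ j : Fin n, (A j).card ^ k := by
  have h : (univ.filter fun z : Fin n → Fin k → Fin n => ∀ j i, z j i ∈ A j)
      = Fintype.piFinset (fun j => Fintype.piFinset fun _ : Fin k => A j) := by
    ext z; simp [Fintype.mem_piFinset]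
  rw [h, Fintype.card_piFinset]
  refine Finset.prod_congr rfl fun j _ => ?_
  rw [Fintype.card_piFinset]
  simp

lemma total_count (n k m : ℕ) (hm : 0 < m) (hmn : 2 * m ≤ n) :
    (UAValid n k).card
      = (∏ j ∈ range (n - m), (max j 1) ^ k) * (∏ t ∈ range m, (n - m + t)) ^ k := by
  have h : UAValid n k = univ.filter
      (fun z : Fin n → Fin k → Fin n => ∀ (j : Fin n) (i : Fin k),
        z j i ∈ (univ.filter fun v : Fin n => (v : ℕ) < max (j : ℕ) 1)) := by
    ext z; simp [UAValid]
  set g : ℕ → ℕ := fun j => (max j 1) ^ k with hg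
  have hcard : ∀ j : Fin n,
      (univ.filter fun v : Fin n => (v : ℕ) < max (j : ℕ) 1).card ^ k = g (j : ℕ) := by
    intro j
    rw [hg, card_filter_lt_fin n _ (by have := j.isLt; omega)]
  rw [h, count_pointwise]
  have e1 : ∏ j : Fin n, (univ.filter fun v : Fin n => (v : ℕ) < max (j : ℕ) 1).card ^ k
      = ∏ j ∈ range n, g j := by
    rw [← Fin.prod_univ_eq_prod_range g n]
    exact Finset.prod_congr rfl fun j _ => hcard j
  have hsplit : ∏ j ∈ range n, g j
      = (∏ j ∈ range (n - m), g j) * ∏ t ∈ range m, g ((n - m) + t) := by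
    rw [← prod_range_add g (n - m) m, Nat.sub_add_cancel (by omega)]
  have e2 : ∀ t ∈ range m, g ((n - m) + t) = ((n - m) + t) ^ k := by
    intro t ht; simp only [hg]; congr 1; omega
  have e3 : ∀ j ∈ range (n - m), g j = (max j 1) ^ k := fun j _ => rfl
  rw [e1, hsplit, Finset.prod_congr rfl e2, Finset.prod_congr rfl e3, prod_pow, prod_pow]

lemma perS_count (n k m : ℕ) (hm : 0 < m) (hmn : 2 * m ≤ n)
    (S : Finset (Fin n)) (hSlow : ∀ v ∈ S, (v : ℕ) < n - m) (hScard : S.card = m - 1) :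
    ((UAValid n k).filter (fun z => ∀ (j : Fin n) (i : Fin k), n - m ≤ (j : ℕ) →
        (z j i ∈ S ∨ z j i ∈ topSet n m))).card
      = (∏ j ∈ range (n - m), (max j 1) ^ k) * (∏ t ∈ range m, (m - 1 + t)) ^ k := by
  have hfe : (UAValid n k).filter (fun z => ∀ (j : Fin n) (i : Fin k), n - m ≤ (j : ℕ) →
      (z j i ∈ S ∨ z j i ∈ topSet n m))
      = univ.filter (fun z : Fin n → Fin k → Fin n => ∀ (j : Fin n) (i : Fin k),
        z j i ∈ (if (j : ℕ) < n - m then univ.filter (fun v : Fin n => (v : ℕ) < max (j : ℕ) 1)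
          else univ.filter (fun v : Fin n => (v : ℕ) < (j : ℕ) ∧ (v ∈ S ∨ v ∈ topSet n m)))) := by
    ext z
    simp only [UAValid, mem_filter, mem_univ, true_and]
    constructor
    · rintro ⟨hv, he⟩ j i
      by_cases hj : (j : ℕ) < n - m
      · rw [if_pos hj, mem_filter]
        exact ⟨mem_univ _, hv j i⟩
      · rw [if_neg hj, mem_filter]
        have h1 := hv j i
        exact ⟨mem_univ _, by omega, he j i (by omega)⟩
    · intro h
      constructor
      · intro j i
        have hji := h j i
        by_cases hj : (j : ℕ) < n - m
        · rw [if_pos hj, mem_filter] at hji; exact hji.2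
        · rw [if_neg hj, mem_filter] at hji
          have := hji.2.1; omega
      · intro j i hj
        have hji := h j i
        rw [if_neg (by omega), mem_filter] at hji
        exact hji.2.2
  rw [hfe, count_pointwise]
  set g : ℕ → ℕ := fun j => (if j < n - m then max j 1 else m - 1 + (j - (n - m))) ^ k with hg
  have hcard : ∀ j : Fin n,
      ((if (j : ℕ) < n - m then univ.filter (fun v : Fin n => (v : ℕ) < max (j : ℕ) 1)
        else univ.filter (fun v : Fin n => (v : ℕ) < (j : ℕ) ∧ (v ∈ S ∨ v ∈ topSet n m))).card) ^ k
      = g (j : ℕ) := by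
    intro j
    simp only [hg]
    by_cases hj : (j : ℕ) < n - m
    · rw [if_pos hj, if_pos hj, card_filter_lt_fin n _ (by have := j.isLt; omega)]
    · rw [if_neg hj, if_neg hj]
      have hset : (univ.filter fun v : Fin n => (v : ℕ) < (j : ℕ) ∧ (v ∈ S ∨ v ∈ topSet n m))
          = S ∪ (univ.filter fun v : Fin n => n - m ≤ (v : ℕ) ∧ (v : ℕ) < (j : ℕ)) := by
        ext v
        simp only [mem_filter, mem_univ, true_and, mem_union, topSet]
        constructor
        · rintro ⟨hvj, hv | hv⟩
          · exact Or.inl hv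
          · exact Or.inr ⟨by simpa using hv, hvj⟩
        · rintro (hv | ⟨hv1, hv2⟩)
          · exact ⟨lt_of_lt_of_le (hSlow v hv) (by omega), Or.inl hv⟩
          · exact ⟨hv2, Or.inr (by simpa using hv1)⟩
      have hdisj : Disjoint S (univ.filter fun v : Fin n => n - m ≤ (v : ℕ) ∧ (v : ℕ) < (j : ℕ)) := by
        rw [Finset.disjoint_left]
        intro v hv hv2
        rw [mem_filter] at hv2
        exact absurd hv2.2.1 (by have := hSlow v hv; omega)
      rw [hset, card_union_of_disjoint hdisj, hScard,
        card_filter_Ico_fin n _ _ (le_of_lt j.isLt)]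
  have e1 : (∏ j : Fin n,
      ((if (j : ℕ) < n - m then univ.filter (fun v : Fin n => (v : ℕ) < max (j : ℕ) 1)
        else univ.filter (fun v : Fin n => (v : ℕ) < (j : ℕ) ∧ (v ∈ S ∨ v ∈ topSet n m))).card) ^ k)
      = ∏ j ∈ range n, g j := by
    rw [← Fin.prod_univ_eq_prod_range g n]
    exact Finset.prod_congr rfl fun j _ => hcard j
  have hsplit : ∏ j ∈ range n, g j
      = (∏ j ∈ range (n - m), g j) * ∏ t ∈ range m, g ((n - m) + t) := by
    rw [← prod_range_add g (n - m) m, Nat.sub_add_cancel (by omega)]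
  have h1 : ∀ j ∈ range (n - m), g j = (max j 1) ^ k := by
    intro j hj; rw [mem_range] at hj; simp only [hg]; rw [if_pos hj]
  have h2 : ∀ t ∈ range m, g ((n - m) + t) = (m - 1 + t) ^ k := by
    intro t ht; simp only [hg]; rw [if_neg (by omega)]; congr 2; omega
  rw [e1, hsplit, Finset.prod_congr rfl h1, Finset.prod_congr rfl h2, prod_pow, prod_pow]

lemma key_ineq (n m : ℕ) (hm : 0 < m) (hmn : 2 * m ≤ n) :
    (∏ t ∈ range m, (m - 1 + t)) * n.descFactorial m
      ≤ (2 * m).descFactorial m * (∏ t ∈ range m, (n - m + t)) := by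
  rw [Nat.descFactorial_eq_prod_range, Nat.descFactorial_eq_prod_range,
    ← prod_range_reflect (fun i => n - i) m, ← prod_range_reflect (fun i => 2 * m - i) m,
    ← prod_mul_distrib, ← prod_mul_distrib]
  refine Finset.prod_le_prod' fun t ht => ?_
  rw [mem_range] at ht
  have e1 : n - (m - 1 - t) = (n - m + t) + 1 := by omega
  have e2 : 2 * m - (m - 1 - t) = (m - 1 + t) + 2 := by omega
  rw [e1, e2]
  have h2 : m - 1 + t ≤ 2 * (n - m + t) := by omega
  nlinarith

/-- For `X` the set of the `m` largest vertices of `G_{n,k}`,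
`ℙ(|N(X)| < m) ≤ C(n-m, m-1) ((2m)_m / (n)_m)^k`. -/
theorem UA_tail_bound_one (n k m : ℕ) (hm : 0 < m) (hmn : 2 * m ≤ n) :
    UAProb n k (fun z => (extNbhd (UAGraph n k z) (topSet n m)).card < m)
      ≤ ((n - m).choose (m - 1) : ℝ) *
        (((2 * m).descFactorial m : ℝ) / (n.descFactorial m : ℝ)) ^ k := by
  set low : Finset (Fin n) := univ.filter (fun v : Fin n => (v : ℕ) < n - m) with hlow
  have hlowcard : low.card = n - m := card_filter_lt_fin n (n - m) (by omega)
  set E := fun z : Fin n → Fin k → Fin n =>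
    (extNbhd (UAGraph n k z) (topSet n m)).card < m with hE
  set ES := fun (S : Finset (Fin n)) (z : Fin n → Fin k → Fin n) =>
    ∀ (j : Fin n) (i : Fin k), n - m ≤ (j : ℕ) →
      (z j i ∈ S ∨ z j i ∈ topSet n m) with hES
  have hsub : (UAValid n k).filter E ⊆
      (powersetCard (m - 1) low).biUnion (fun S => (UAValid n k).filter (ES S)) := by
    intro z hz
    rw [mem_filter] at hz
    obtain ⟨hzv, hcd⟩ := hz
    have hzv' : ∀ (j : Fin n) (i : Fin k), (z j i : ℕ) < max (j : ℕ) 1 := by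
      have := hzv
      simp only [UAValid, mem_filter, mem_univ, true_and] at this
      exact this
    have hcd' : (extNbhd (UAGraph n k z) (topSet n m)).card < m := hcd
    have hN : extNbhd (UAGraph n k z) (topSet n m) ⊆ low := by
      intro u hu
      simp only [extNbhd, mem_filter, mem_univ, true_and] at hu
      have h1 : u ∉ topSet n m := hu.1
      simp only [topSet, mem_filter, mem_univ, true_and] at h1
      simp only [hlow, mem_filter, mem_univ, true_and]
      omega
    obtain ⟨S, hNS, hSlow, hScard⟩ := Finset.exists_subsuperset_card_eq hN
      (show (extNbhd (UAGraph n k z) (topSet n m)).card ≤ m - 1 by omega)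
      (by rw [hlowcard]; omega)
    refine mem_biUnion.mpr ⟨S, mem_powersetCard.mpr ⟨hSlow, hScard⟩,
      mem_filter.mpr ⟨hzv, ?_⟩⟩
    intro j i hj
    have hji : (z j i : ℕ) < (j : ℕ) := by
      have h1 := hzv' j i; omega
    by_cases hX : z j i ∈ topSet n m
    · exact Or.inr hX
    · left
      apply hNS
      simp only [extNbhd, mem_filter, mem_univ, true_and]
      refine ⟨hX, j, ?_, ?_⟩
      · simp only [topSet, mem_filter, mem_univ, true_and]; exact hj
      · rw [UAGraph, SimpleGraph.fromRel_adj]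
        refine ⟨?_, Or.inr ⟨hji, ⟨i, rfl⟩⟩⟩
        intro hju
        exact absurd (congrArg Fin.val hju) (by omega)
  set F := ∏ j ∈ range (n - m), (max j 1) ^ k with hF
  set Q := ∏ t ∈ range m, (m - 1 + t) with hQ
  set R := ∏ t ∈ range m, (n - m + t) with hR
  have hcount : ∀ S ∈ powersetCard (m - 1) low,
      ((UAValid n k).filter (ES S)).card = F * Q ^ k := by
    intro S hS
    obtain ⟨hSl, hSc⟩ := mem_powersetCard.mp hS
    have hSl' : ∀ v ∈ S, (v : ℕ) < n - m := by
      intro v hv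
      have := hSl hv
      simp only [hlow, mem_filter, mem_univ, true_and] at this
      exact this
    exact perS_count n k m hm hmn S hSl' hSc
  have htot : (UAValid n k).card = F * R ^ k := total_count n k m hm hmn
  have hEcard : ((UAValid n k).filter E).card
      ≤ (n - m).choose (m - 1) * (F * Q ^ k) := by
    calc ((UAValid n k).filter E).card
        ≤ ((powersetCard (m - 1) low).biUnion
            (fun S => (UAValid n k).filter (ES S))).card := card_le_card hsub
      _ ≤ ∑ S ∈ powersetCard (m - 1) low, ((UAValid n k).filter (ES S)).card :=
          card_biUnion_le
      _ = ∑ S ∈ powersetCard (m - 1) low, F * Q ^ k := sum_congr rfl hcount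
      _ = (n - m).choose (m - 1) * (F * Q ^ k) := by
          rw [sum_const, card_powersetCard, hlowcard, smul_eq_mul]
  have hkey := key_ineq n m hm hmn
  have hFpos : 0 < F := prod_pos fun j _ => pow_pos (by omega) k
  have hRpos : 0 < R ^ k := pow_pos (prod_pos fun t ht => by omega) k
  have hDn : 0 < n.descFactorial m := Nat.pos_of_ne_zero fun h => by
    have := Nat.descFactorial_eq_zero_iff_lt.mp h; omega
  have hnat : ((UAValid n k).filter E).card * (n.descFactorial m) ^ k
      ≤ (n - m).choose (m - 1) * ((2 * m).descFactorial m) ^ k * (UAValid n k).card := by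
    calc ((UAValid n k).filter E).card * (n.descFactorial m) ^ k
        ≤ ((n - m).choose (m - 1) * (F * Q ^ k)) * (n.descFactorial m) ^ k :=
          Nat.mul_le_mul_right _ hEcard
      _ = (n - m).choose (m - 1) * F * (Q * n.descFactorial m) ^ k := by ring
      _ ≤ (n - m).choose (m - 1) * F * ((2 * m).descFactorial m * R) ^ k :=
          Nat.mul_le_mul_left _ (Nat.pow_le_pow_left hkey k)
      _ = (n - m).choose (m - 1) * ((2 * m).descFactorial m) ^ k * (F * R ^ k) := by ring
      _ = (n - m).choose (m - 1) * ((2 * m).descFactorial m) ^ k * (UAValid n k).card := by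
          rw [htot]
  have hTpos : (0 : ℝ) < ((UAValid n k).card : ℝ) := by
    have : 0 < (UAValid n k).card := htot ▸ Nat.mul_pos hFpos hRpos
    exact_mod_cast this
  have hDnpos : (0 : ℝ) < ((n.descFactorial m : ℝ)) ^ k := by
    have : (0 : ℝ) < (n.descFactorial m : ℝ) := by exact_mod_cast hDn
    positivity
  rw [UAProb, div_pow, ← mul_div_assoc, div_le_div_iff₀ hTpos hDnpos]
  have hcc : (@Finset.filter _ E (fun a => Classical.propDecidable (E a)) (UAValid n k))
      = Finset.filter E (UAValid n k) := by
    congr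
  rw [hcc]
  exact_mod_cast hnat
end

section
/- In the uniform attachment graph $G_{n,k}$, let $X = \{n-m+1, \dots, n\}$ with $3m \le n$. Then $\mathbb{P}(|N(X)| < 2m) \le \binom{n-m}{2m-1} \left( \frac{(3m)_m}{(n)_m} \right)^k$, where $(a)_j$ denotes the falling factorial. -/
open Finset
open scoped Classical

/- ### Auxiliary lemmas -/

lemma UA_card_pi_filter (n k : ℕ) (S : Fin n → Finset (Fin n)) :
    (Finset.univ.filter (fun z : Fin n → Fin k → Fin n =>
        ∀ (j : Fin n) (i : Fin k), z j i ∈ S j)).card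
      = ∏ j, (S j).card ^ k := by
  classical
  rw [← Fintype.card_subtype]
  rw [Fintype.card_congr
    (Equiv.subtypePiEquivPi (p := fun (j : Fin n) (g : Fin k → Fin n) => ∀ i, g i ∈ S j))]
  rw [Fintype.card_pi]
  refine Finset.prod_congr rfl fun j _ => ?_
  rw [Fintype.card_congr
    (Equiv.subtypePiEquivPi (p := fun (_ : Fin k) (v : Fin n) => v ∈ S j))]
  rw [Fintype.card_pi]
  simp [Fintype.card_coe]

lemma UA_fin_filter_card (n : ℕ) (p : ℕ → Prop) [DecidablePred p] :
    (Finset.univ.filter (fun v : Fin n => p (v : ℕ))).card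
      = ((Finset.range n).filter p).card := by
  refine Finset.card_bij (fun v _ => (v : ℕ)) ?_ ?_ ?_
  · intro v hv; simp only [mem_filter, mem_univ, true_and, mem_range] at hv ⊢
    exact ⟨v.isLt, hv⟩
  · intro a ha b hb h; exact Fin.ext h
  · intro b hb; simp only [mem_filter, mem_range] at hb
    exact ⟨⟨b, hb.1⟩, by simp [hb.2], rfl⟩

lemma UA_card_lt (n c : ℕ) (hc : c ≤ n) :
    (Finset.univ.filter (fun v : Fin n => (v : ℕ) < c)).card = c := by
  rw [UA_fin_filter_card n (fun v => v < c)]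
  have : (Finset.range n).filter (fun v => v < c) = Finset.range c := by
    ext a; simp only [mem_filter, mem_range]; omega
  rw [this, Finset.card_range]

lemma UA_card_Ico (n a b : ℕ) (hb : b ≤ n) :
    (Finset.univ.filter (fun v : Fin n => a ≤ (v : ℕ) ∧ (v : ℕ) < b)).card = b - a := by
  rw [UA_fin_filter_card n (fun v => a ≤ v ∧ v < b)]
  have : (Finset.range n).filter (fun v => a ≤ v ∧ v < b) = Finset.Ico a b := by
    ext x; simp only [mem_filter, mem_range, mem_Ico]; omega
  rw [this, Nat.card_Ico]

lemma UA_card_valid (n k : ℕ) (hn : 1 ≤ n) :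
    (UAValid n k).card = ∏ j : Fin n, (max (j : ℕ) 1) ^ k := by
  have h : UAValid n k = Finset.univ.filter
      (fun z : Fin n → Fin k → Fin n => ∀ (j : Fin n) (i : Fin k),
        z j i ∈ Finset.univ.filter (fun v : Fin n => (v : ℕ) < max (j : ℕ) 1)) := by
    unfold UAValid
    apply Finset.filter_congr
    intro z _
    simp only [mem_filter, mem_univ, true_and]
  rw [h, UA_card_pi_filter]
  refine Finset.prod_congr rfl fun j _ => ?_
  congr 1
  exact UA_card_lt n _ (by have := j.isLt; omega)

lemma UA_card_EY (n k m : ℕ) (hm : 0 < m) (hmn : 3 * m ≤ n) (Y : Finset (Fin n))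
    (hY : Y.card = 2 * m - 1) :
    ((UAValid n k).filter
        (fun z => ∀ (j : Fin n) (i : Fin k), n - m ≤ (j : ℕ) → z j i ∈ topSet n m ∪ Y)).card
      ≤ ∏ j : Fin n,
          (if n - m ≤ (j : ℕ) then (j : ℕ) - (n - m) + (2 * m - 1) else max (j : ℕ) 1) ^ k := by
  have h : (UAValid n k).filter
        (fun z => ∀ (j : Fin n) (i : Fin k), n - m ≤ (j : ℕ) → z j i ∈ topSet n m ∪ Y)
      = Finset.univ.filter (fun z : Fin n → Fin k → Fin n => ∀ (j : Fin n) (i : Fin k),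
          z j i ∈ Finset.univ.filter (fun v : Fin n =>
            (v : ℕ) < max (j : ℕ) 1 ∧ (n - m ≤ (j : ℕ) → v ∈ topSet n m ∪ Y))) := by
    unfold UAValid
    rw [Finset.filter_filter]
    apply Finset.filter_congr
    intro z _
    simp only [mem_filter, mem_univ, true_and]
    constructor
    · rintro ⟨h1, h2⟩ j i; exact ⟨h1 j i, fun hj => h2 j i hj⟩
    · intro h; exact ⟨fun j i => (h j i).1, fun j i hj => (h j i).2 hj⟩
  rw [h, UA_card_pi_filter]
  refine Finset.prod_le_prod' fun j _ => Nat.pow_le_pow_left ?_ k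
  by_cases hj : n - m ≤ (j : ℕ)
  · rw [if_pos hj]
    have hjv : (j : ℕ) < n := j.isLt
    have hsub : Finset.univ.filter (fun v : Fin n =>
          (v : ℕ) < max (j : ℕ) 1 ∧ (n - m ≤ (j : ℕ) → v ∈ topSet n m ∪ Y))
        ⊆ (Finset.univ.filter (fun v : Fin n => n - m ≤ (v : ℕ) ∧ (v : ℕ) < (j : ℕ))) ∪ Y := by
      intro v hv
      simp only [mem_filter, mem_univ, true_and] at hv
      obtain ⟨hv1, hv2⟩ := hv
      rcases Finset.mem_union.1 (hv2 hj) with hX | hYm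
      · refine Finset.mem_union_left _ ?_
        simp only [topSet, mem_filter, mem_univ, true_and] at hX
        simp only [mem_filter, mem_univ, true_and]
        exact ⟨hX, by omega⟩
      · exact Finset.mem_union_right _ hYm
    calc (Finset.univ.filter (fun v : Fin n =>
          (v : ℕ) < max (j : ℕ) 1 ∧ (n - m ≤ (j : ℕ) → v ∈ topSet n m ∪ Y))).card
        ≤ ((Finset.univ.filter (fun v : Fin n => n - m ≤ (v : ℕ) ∧ (v : ℕ) < (j : ℕ))) ∪ Y).card :=
          Finset.card_le_card hsub
      _ ≤ (Finset.univ.filter (fun v : Fin n => n - m ≤ (v : ℕ) ∧ (v : ℕ) < (j : ℕ))).card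
            + Y.card := Finset.card_union_le _ _
      _ ≤ (j : ℕ) - (n - m) + (2 * m - 1) := by
          rw [UA_card_Ico n _ _ (le_of_lt hjv), hY]
  · rw [if_neg hj]
    have h2 : Finset.univ.filter (fun v : Fin n =>
          (v : ℕ) < max (j : ℕ) 1 ∧ (n - m ≤ (j : ℕ) → v ∈ topSet n m ∪ Y))
        = Finset.univ.filter (fun v : Fin n => (v : ℕ) < max (j : ℕ) 1) := by
      apply Finset.filter_congr
      intro v _
      simp only [and_iff_left_iff_imp]
      intro _ hc; exact absurd hc hj
    rw [h2, UA_card_lt n _ (by have := j.isLt; omega)]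

lemma UA_card_topSet_compl (n m : ℕ) (hmn : m ≤ n) :
    (Finset.univ \ topSet n m).card = n - m := by
  have h : Finset.univ \ topSet n m
      = Finset.univ.filter (fun v : Fin n => (v : ℕ) < n - m) := by
    ext v
    simp only [topSet, Finset.mem_sdiff, mem_filter, mem_univ, true_and]
    omega
  rw [h]
  exact UA_card_lt n (n - m) (by omega)

lemma UA_subset_biUnion (n k m : ℕ) (hm : 0 < m) (hmn : 3 * m ≤ n) :
    (UAValid n k).filter
        (fun z => (extNbhd (UAGraph n k z) (topSet n m)).card < 2 * m)
      ⊆ ((Finset.univ \ topSet n m).powersetCard (2 * m - 1)).biUnion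
          (fun Y => (UAValid n k).filter
            (fun z => ∀ (j : Fin n) (i : Fin k),
              n - m ≤ (j : ℕ) → z j i ∈ topSet n m ∪ Y)) := by
  intro z hz
  rw [Finset.mem_filter] at hz
  obtain ⟨hzv, hzcard⟩ := hz
  have hvalid : ∀ (j : Fin n) (i : Fin k), (z j i : ℕ) < max (j : ℕ) 1 := by
    have := hzv
    simp only [UAValid, mem_filter, mem_univ, true_and] at this
    exact this
  set N := extNbhd (UAGraph n k z) (topSet n m) with hN
  have hNsub : N ⊆ Finset.univ \ topSet n m := by
    intro u hu
    simp only [hN, extNbhd, mem_filter, mem_univ, true_and] at hu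
    simp only [Finset.mem_sdiff, mem_univ, true_and]
    exact hu.1
  have hcompl : (Finset.univ \ topSet n m).card = n - m := UA_card_topSet_compl n m (by omega)
  obtain ⟨Y, hNY, hYsub, hYcard⟩ := Finset.exists_subsuperset_card_eq hNsub
    (by omega : N.card ≤ 2 * m - 1) (by omega : 2 * m - 1 ≤ (Finset.univ \ topSet n m).card)
  rw [Finset.mem_biUnion]
  refine ⟨Y, Finset.mem_powersetCard.2 ⟨hYsub, hYcard⟩, ?_⟩
  rw [Finset.mem_filter]
  refine ⟨hzv, fun j i hj => ?_⟩
  by_cases hX : z j i ∈ topSet n m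
  · exact Finset.mem_union_left _ hX
  · refine Finset.mem_union_right _ (hNY ?_)
    simp only [hN, extNbhd, mem_filter, mem_univ, true_and]
    refine ⟨hX, j, ?_, ?_⟩
    · simp only [topSet, mem_filter, mem_univ, true_and]; exact hj
    · have hlt : (z j i : ℕ) < (j : ℕ) := by
        have := hvalid j i
        have hj2 : 2 ≤ (j : ℕ) := by omega
        omega
      simp only [UAGraph, SimpleGraph.fromRel_adj]
      refine ⟨?_, Or.inr ⟨hlt, i, rfl⟩⟩
      intro hEq
      exact absurd (congrArg Fin.val hEq) (by omega)

lemma UA_ratio (n m : ℕ) (hm : 0 < m) (hmn : 3 * m ≤ n) :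
    ∏ s ∈ Finset.range m, (((s + (2 * m - 1) : ℕ) : ℝ) / ((n - m + s : ℕ) : ℝ))
      ≤ ((3 * m).descFactorial m : ℝ) / (n.descFactorial m : ℝ) := by
  have h1 : ((3 * m).descFactorial m : ℝ) / (n.descFactorial m : ℝ)
      = ∏ s ∈ Finset.range m, (((3 * m - s : ℕ) : ℝ) / ((n - s : ℕ) : ℝ)) := by
    rw [Finset.prod_div_distrib, ← Nat.cast_prod, ← Nat.cast_prod,
      ← Nat.descFactorial_eq_prod_range, ← Nat.descFactorial_eq_prod_range]
  rw [h1]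
  conv_rhs => rw [← Finset.prod_range_reflect]
  refine Finset.prod_le_prod (fun s _ => by positivity) (fun s hs => ?_)
  rw [Finset.mem_range] at hs
  have e1 : 3 * m - (m - 1 - s) = 2 * m + 1 + s := by omega
  have e2 : n - (m - 1 - s) = n - m + 1 + s := by omega
  rw [e1, e2]
  have hd1 : (0:ℝ) < ((n - m + s : ℕ) : ℝ) := by
    have : 0 < n - m + s := by omega
    exact_mod_cast this
  have hd2 : (0:ℝ) < ((n - m + 1 + s : ℕ) : ℝ) := by
    have : 0 < n - m + 1 + s := by omega
    exact_mod_cast this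
  rw [div_le_div_iff₀ hd1 hd2]
  have key : (s + (2 * m - 1)) * (n - m + 1 + s) ≤ (2 * m + 1 + s) * (n - m + s) := by
    have ha : s + (2 * m - 1) ≤ 2 * (n - m + s) := by omega
    have hb : 2 * m + 1 + s = s + (2 * m - 1) + 2 := by omega
    have hc : (s + (2*m-1)) * (n - m + 1 + s)
        = (s + (2*m-1)) * (n-m+s) + (s + (2*m-1)) := by ring
    rw [hc, hb]
    nlinarith [Nat.mul_le_mul_left 1 ha]
  calc ((s + (2 * m - 1) : ℕ) : ℝ) * ((n - m + 1 + s : ℕ) : ℝ)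
      = (((s + (2 * m - 1)) * (n - m + 1 + s) : ℕ) : ℝ) := by push_cast; ring
    _ ≤ (((2 * m + 1 + s) * (n - m + s) : ℕ) : ℝ) := by exact_mod_cast key
    _ = ((2 * m + 1 + s : ℕ) : ℝ) * ((n - m + s : ℕ) : ℝ) := by push_cast; ring

lemma UA_prod_ratio (n k m : ℕ) (hm : 0 < m) (hmn : 3 * m ≤ n) :
    ((∏ j : Fin n,
        (if n - m ≤ (j : ℕ) then (j : ℕ) - (n - m) + (2 * m - 1) else max (j : ℕ) 1) ^ k : ℕ) : ℝ)
      / ((∏ j : Fin n, (max (j : ℕ) 1) ^ k : ℕ) : ℝ)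
      ≤ (((3 * m).descFactorial m : ℝ) / (n.descFactorial m : ℝ)) ^ k := by
  set F : ℕ → ℝ := fun t =>
    (((if n - m ≤ t then t - (n - m) + (2 * m - 1) else max t 1 : ℕ) : ℝ)
      / ((max t 1 : ℕ) : ℝ)) with hF
  have hstep1 : ((∏ j : Fin n,
        (if n - m ≤ (j : ℕ) then (j : ℕ) - (n - m) + (2 * m - 1) else max (j : ℕ) 1) ^ k : ℕ) : ℝ)
      / ((∏ j : Fin n, (max (j : ℕ) 1) ^ k : ℕ) : ℝ)
      = ∏ t ∈ Finset.range n, (F t) ^ k := by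
    rw [Nat.cast_prod, Nat.cast_prod, ← Finset.prod_div_distrib]
    rw [← Fin.prod_univ_eq_prod_range (fun t => (F t) ^ k) n]
    refine Finset.prod_congr rfl fun j _ => ?_
    rw [hF]
    rw [Nat.cast_pow, Nat.cast_pow, ← div_pow]
  rw [hstep1]
  have hmn' : n - m ≤ n := Nat.sub_le n m
  rw [← Finset.prod_range_mul_prod_Ico (fun t => (F t) ^ k) hmn']
  have hleft : ∏ t ∈ Finset.range (n - m), (F t) ^ k = 1 := by
    refine Finset.prod_eq_one fun t ht => ?_
    rw [Finset.mem_range] at ht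
    have : F t = 1 := by
      rw [hF]
      simp only [if_neg (by omega : ¬ n - m ≤ t)]
      rw [div_self]
      have : 0 < max t 1 := by omega
      exact_mod_cast this.ne'
    rw [this, one_pow]
  rw [hleft, one_mul]
  rw [Finset.prod_Ico_eq_prod_range]
  have hnm : n - (n - m) = m := by omega
  rw [hnm]
  have hterm : ∀ s ∈ Finset.range m,
      (F (n - m + s)) ^ k
        = (((s + (2 * m - 1) : ℕ) : ℝ) / ((n - m + s : ℕ) : ℝ)) ^ k := by
    intro s hs
    have hFval : F (n - m + s) = ((s + (2 * m - 1) : ℕ) : ℝ) / ((n - m + s : ℕ) : ℝ) := by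
      simp only [hF]
      rw [if_pos (Nat.le_add_right _ _)]
      have e1 : n - m + s - (n - m) + (2 * m - 1) = s + (2 * m - 1) := by omega
      have e2 : max (n - m + s) 1 = n - m + s := by omega
      rw [e1, e2]
    rw [hFval]
  rw [Finset.prod_congr rfl hterm, Finset.prod_pow]
  refine pow_le_pow_left₀ ?_ (UA_ratio n m hm hmn) k
  exact Finset.prod_nonneg fun s _ => by positivity

/-- For `X` the set of the `m` largest vertices of `G_{n,k}`,
`ℙ(|N(X)| < 2m) ≤ C(n-m, 2m-1) ((3m)_m / (n)_m)^k`. -/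
theorem UA_tail_bound_two (n k m : ℕ) (hm : 0 < m) (hmn : 3 * m ≤ n) :
    UAProb n k (fun z => (extNbhd (UAGraph n k z) (topSet n m)).card < 2 * m)
      ≤ ((n - m).choose (2 * m - 1) : ℝ) *
        (((3 * m).descFactorial m : ℝ) / (n.descFactorial m : ℝ)) ^ k := by
  classical
  have hn1 : 1 ≤ n := by omega
  set D : ℕ := ∏ j : Fin n,
    (if n - m ≤ (j : ℕ) then (j : ℕ) - (n - m) + (2 * m - 1) else max (j : ℕ) 1) ^ k with hD
  set B : ℕ := (UAValid n k).card with hB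
  have hBpos : 0 < B := by
    rw [hB, UA_card_valid n k hn1]
    exact Finset.prod_pos fun j _ => pow_pos (by omega) k
  have hcompl : (Finset.univ \ topSet n m).card = n - m := UA_card_topSet_compl n m (by omega)
  have hA : ((UAValid n k).filter
      (fun z => (extNbhd (UAGraph n k z) (topSet n m)).card < 2 * m)).card
      ≤ (n - m).choose (2 * m - 1) * D := by
    calc ((UAValid n k).filter
        (fun z => (extNbhd (UAGraph n k z) (topSet n m)).card < 2 * m)).card
        ≤ (((Finset.univ \ topSet n m).powersetCard (2 * m - 1)).biUnion
            (fun Y => (UAValid n k).filter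
              (fun z => ∀ (j : Fin n) (i : Fin k),
                n - m ≤ (j : ℕ) → z j i ∈ topSet n m ∪ Y))).card :=
          Finset.card_le_card (UA_subset_biUnion n k m hm hmn)
      _ ≤ ∑ Y ∈ (Finset.univ \ topSet n m).powersetCard (2 * m - 1),
            ((UAValid n k).filter
              (fun z => ∀ (j : Fin n) (i : Fin k),
                n - m ≤ (j : ℕ) → z j i ∈ topSet n m ∪ Y)).card :=
          Finset.card_biUnion_le
      _ ≤ ∑ Y ∈ (Finset.univ \ topSet n m).powersetCard (2 * m - 1), D := by
          refine Finset.sum_le_sum fun Y hY => ?_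
          rw [Finset.mem_powersetCard] at hY
          exact UA_card_EY n k m hm hmn Y hY.2
      _ = ((Finset.univ \ topSet n m).powersetCard (2 * m - 1)).card * D := by
          rw [Finset.sum_const, smul_eq_mul]
      _ = (n - m).choose (2 * m - 1) * D := by
          rw [Finset.card_powersetCard, hcompl]
  have hBposR : (0:ℝ) < (B : ℝ) := by exact_mod_cast hBpos
  have hmain : UAProb n k
      (fun z => (extNbhd (UAGraph n k z) (topSet n m)).card < 2 * m)
      ≤ ((n - m).choose (2 * m - 1) : ℝ) * ((D : ℝ) / (B : ℝ)) := by
    rw [UAProb, ← hB, ← mul_div_assoc]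
    rw [div_le_div_iff_of_pos_right hBposR]
    push_cast
    rw [Finset.filter_congr_decidable]
    exact_mod_cast hA
  refine hmain.trans ?_
  refine mul_le_mul_of_nonneg_left ?_ (by positivity)
  rw [hD, hB, UA_card_valid n k hn1]
  exact UA_prod_ratio n k m hm hmn
end

section
/- Fix an integer $m \ge 1$ and $n \ge 2m$, and let $Y \subseteq [n-m]$ with $|Y| = m-1$. In the uniform attachment graph $G_{n,k}$ with $X = \{n-m+1,\dots,n\}$, the probability that $N(X) \subseteq Y$ equals $\prod_{i=0}^{m-1} \left( \frac{m-1+i}{n-m+i} \right)^k$, and this product is at most $\left( \frac{(2m)_m}{(n)_m} \right)^k$. -/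
open Finset
open scoped Classical

/-- Counting elements of `Fin n` whose value satisfies `P` via `Finset.range`. -/
lemma card_filter_val_fin (n : ℕ) (P : ℕ → Prop) [DecidablePred P] :
    (Finset.univ.filter (fun v : Fin n => P (v : ℕ))).card
      = ((Finset.range n).filter P).card := by
  rw [← Nat.Iio_eq_range, ← Fin.map_valEmbedding_univ, Finset.filter_map,
    Finset.card_map]
  rfl

/-- The number of choice sequences with each coordinate of vertex `j` landing in `S j`. -/
lemma card_cube (n k : ℕ) (S : Fin n → Finset (Fin n)) :
    (Finset.univ.filter (fun z : Fin n → Fin k → Fin n => ∀ j i, z j i ∈ S j)).card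
      = ∏ j, (S j).card ^ k := by
  have h : (Finset.univ.filter (fun z : Fin n → Fin k → Fin n => ∀ j i, z j i ∈ S j))
      = Fintype.piFinset (fun j => Fintype.piFinset (fun _ : Fin k => S j)) := by
    ext z
    simp [Fintype.mem_piFinset]
  rw [h, Fintype.card_piFinset]
  simp [Fintype.card_piFinset]

/-- For `X` the set of the `m` largest vertices and `Y` a set of `m-1` of the
first `n-m` vertices, `ℙ(N(X) ⊆ Y) = ∏_{i=0}^{m-1} ((m-1+i)/(n-m+i))^k`, and
this product is at most `((2m)_m / (n)_m)^k`. -/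
theorem UA_subset_prob (n k m : ℕ) (hm : 1 ≤ m) (hmn : 2 * m ≤ n)
    (Y : Finset (Fin n)) (hYsub : ∀ v ∈ Y, (v : ℕ) < n - m)
    (hYcard : Y.card = m - 1) :
    UAProb n k (fun z => extNbhd (UAGraph n k z) (topSet n m) ⊆ Y)
        = ∏ i ∈ Finset.range m, (((m - 1 + i : ℕ) : ℝ) / ((n - m + i : ℕ) : ℝ)) ^ k
      ∧ ∏ i ∈ Finset.range m, (((m - 1 + i : ℕ) : ℝ) / ((n - m + i : ℕ) : ℝ)) ^ k
        ≤ (((2 * m).descFactorial m : ℝ) / (n.descFactorial m : ℝ)) ^ k := by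
  classical
  constructor
  · -- the exact probability computation
    set S : Fin n → Finset (Fin n) :=
      fun j => Finset.univ.filter (fun v : Fin n => (v : ℕ) < max (j : ℕ) 1) with hS
    set T : Fin n → Finset (Fin n) :=
      fun j => Finset.univ.filter (fun v : Fin n =>
        (v : ℕ) < max (j : ℕ) 1 ∧ (n - m ≤ (j : ℕ) → (v ∈ Y ∨ n - m ≤ (v : ℕ)))) with hT
    have hValid : UAValid n k
        = Finset.univ.filter (fun z : Fin n → Fin k → Fin n => ∀ j i, z j i ∈ S j) := by
      unfold UAValid
      ext z
      simp [hS]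
    have hEvent : (UAValid n k).filter
          (fun z => extNbhd (UAGraph n k z) (topSet n m) ⊆ Y)
        = Finset.univ.filter (fun z : Fin n → Fin k → Fin n => ∀ j i, z j i ∈ T j) := by
      ext z
      simp only [UAValid, Finset.mem_filter, Finset.mem_univ, true_and, hT]
      constructor
      · rintro ⟨hv, hE⟩ j i
        refine ⟨hv j i, fun hj => ?_⟩
        by_contra hcon
        push_neg at hcon
        obtain ⟨hY, hlt⟩ := hcon
        have h1 : (1 : ℕ) ≤ (j : ℕ) := by omega
        have hlt' : (z j i : ℕ) < (j : ℕ) := by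
          have := hv j i; omega
        have hmem : z j i ∈ extNbhd (UAGraph n k z) (topSet n m) := by
          simp only [extNbhd, topSet, Finset.mem_filter, Finset.mem_univ, true_and, not_le]
          refine ⟨by omega, j, hj, ?_⟩
          simp only [UAGraph, SimpleGraph.fromRel_adj]
          refine ⟨?_, Or.inr ⟨hlt', i, rfl⟩⟩
          intro h
          rw [h] at hlt'
          omega
        exact hY (hE hmem)
      · intro h
        refine ⟨fun j i => (h j i).1, ?_⟩
        intro u hu
        simp only [extNbhd, topSet, Finset.mem_filter, Finset.mem_univ, true_and,
          not_le] at hu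
        obtain ⟨hu1, x, hx, hadj⟩ := hu
        simp only [UAGraph, SimpleGraph.fromRel_adj] at hadj
        obtain ⟨hne, hor⟩ := hadj
        rcases hor with ⟨hlt, i, hz⟩ | ⟨hlt, i, hz⟩
        · omega
        · have := (h x i).2 hx
          rw [hz] at this
          rcases this with hY | hge
          · exact hY
          · omega
    have cardS : ∀ j : Fin n, (S j).card = max (j : ℕ) 1 := by
      intro j
      rw [hS]
      simp only
      rw [card_filter_val_fin n (fun x => x < max (j : ℕ) 1)]
      have hr : (Finset.range n).filter (fun x => x < max (j : ℕ) 1)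
          = Finset.range (max (j : ℕ) 1) := by
        ext x
        simp only [Finset.mem_filter, Finset.mem_range]
        have := j.isLt
        omega
      rw [hr, Finset.card_range]
    have cardT : ∀ j : Fin n, n - m ≤ (j : ℕ) →
        (T j).card = (m - 1) + ((j : ℕ) - (n - m)) := by
      intro j hj
      have h1 : (1 : ℕ) ≤ (j : ℕ) := by omega
      have hmax : max (j : ℕ) 1 = (j : ℕ) := by omega
      have hTj : T j = Y ∪ Finset.univ.filter
          (fun v : Fin n => n - m ≤ (v : ℕ) ∧ (v : ℕ) < (j : ℕ)) := by
        rw [hT]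
        ext v
        simp only [Finset.mem_filter, Finset.mem_univ, true_and, Finset.mem_union, hmax]
        constructor
        · rintro ⟨hv1, hv2⟩
          rcases hv2 hj with h | h
          · exact Or.inl h
          · exact Or.inr ⟨h, hv1⟩
        · rintro (h | ⟨h1', h2'⟩)
          · exact ⟨lt_of_lt_of_le (hYsub v h) (by omega), fun _ => Or.inl h⟩
          · exact ⟨h2', fun _ => Or.inr h1'⟩
      have hdisj : Disjoint Y (Finset.univ.filter
          (fun v : Fin n => n - m ≤ (v : ℕ) ∧ (v : ℕ) < (j : ℕ))) := by
        rw [Finset.disjoint_left]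
        intro v hv hv'
        simp only [Finset.mem_filter, Finset.mem_univ, true_and] at hv'
        have := hYsub v hv
        omega
      rw [hTj, Finset.card_union_of_disjoint hdisj, hYcard]
      congr 1
      rw [card_filter_val_fin n (fun x => n - m ≤ x ∧ x < (j : ℕ))]
      have hr : (Finset.range n).filter (fun x => n - m ≤ x ∧ x < (j : ℕ))
          = Finset.Ico (n - m) (j : ℕ) := by
        ext x
        simp only [Finset.mem_filter, Finset.mem_range, Finset.mem_Ico]
        have := j.isLt
        omega
      rw [hr, Nat.card_Ico]
    have cardT' : ∀ j : Fin n, (j : ℕ) < n - m → T j = S j := by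
      intro j hj
      rw [hT, hS]
      ext v
      simp only [Finset.mem_filter, Finset.mem_univ, true_and]
      constructor
      · exact fun h => h.1
      · exact fun h => ⟨h, fun hc => absurd hc (by omega)⟩
    -- the two counts
    set c : ℕ → ℕ := fun j => if n - m ≤ j then (m - 1) + (j - (n - m)) else max j 1
      with hcdef
    have hcardValid : (UAValid n k).card = ∏ j ∈ Finset.range n, (max j 1) ^ k := by
      rw [hValid, card_cube, ← Fin.prod_univ_eq_prod_range (fun j => (max j 1) ^ k) n]
      exact Finset.prod_congr rfl fun j _ => by rw [cardS j]
    have hcardEvent : ((UAValid n k).filter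
          (fun z => extNbhd (UAGraph n k z) (topSet n m) ⊆ Y)).card
        = ∏ j ∈ Finset.range n, c j ^ k := by
      rw [hEvent, card_cube, ← Fin.prod_univ_eq_prod_range (fun j => c j ^ k) n]
      refine Finset.prod_congr rfl fun j _ => ?_
      by_cases hj : n - m ≤ (j : ℕ)
      · rw [cardT j hj, hcdef]
        simp [hj]
      · rw [cardT' j (by omega), cardS j, hcdef]
        simp [hj]
    unfold UAProb
    rw [Finset.filter_congr_decidable] at hcardEvent ⊢
    rw [hcardEvent, hcardValid]
    -- now pure arithmetic
    have split : ∀ f : ℕ → ℝ, ∏ j ∈ Finset.range n, f j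
        = (∏ j ∈ Finset.range (n - m), f j) * ∏ i ∈ Finset.range m, f (n - m + i) := by
      intro f
      rw [Finset.range_eq_Ico,
        ← Finset.prod_Ico_consecutive f (Nat.zero_le (n - m)) (by omega : n - m ≤ n),
        ← Finset.range_eq_Ico, Finset.prod_Ico_eq_prod_range]
      have h : n - (n - m) = m := by omega
      rw [h]
    rw [Nat.cast_prod, Nat.cast_prod]
    simp only [Nat.cast_pow]
    rw [split, split]
    have hAeq : (∏ j ∈ Finset.range (n - m), ((c j : ℝ)) ^ k)
        = ∏ j ∈ Finset.range (n - m), ((max j 1 : ℕ) : ℝ) ^ k := by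
      refine Finset.prod_congr rfl fun j hj => ?_
      rw [Finset.mem_range] at hj
      rw [hcdef]
      simp only [if_neg (by omega : ¬ n - m ≤ j)]
    rw [hAeq]
    have hA : (∏ j ∈ Finset.range (n - m), ((max j 1 : ℕ) : ℝ) ^ k) ≠ 0 := by
      refine Finset.prod_ne_zero_iff.mpr fun j _ => ?_
      have : 0 < max j 1 := by omega
      positivity
    rw [mul_div_mul_left _ _ hA, ← Finset.prod_div_distrib]
    refine Finset.prod_congr rfl fun i hi => ?_
    rw [Finset.mem_range] at hi
    have hc1 : c (n - m + i) = m - 1 + i := by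
      rw [hcdef]
      simp only [if_pos (by omega : n - m ≤ n - m + i)]
      omega
    have hc2 : max (n - m + i) 1 = n - m + i := by omega
    rw [hc1, hc2, div_pow]
  · -- the upper bound
    have hRHS : (((2 * m).descFactorial m : ℝ) / (n.descFactorial m : ℝ)) ^ k
        = ∏ i ∈ Finset.range m, (((2 * m - i : ℕ) : ℝ) / ((n - i : ℕ) : ℝ)) ^ k := by
      rw [Nat.descFactorial_eq_prod_range, Nat.descFactorial_eq_prod_range,
        Nat.cast_prod, Nat.cast_prod, ← Finset.prod_div_distrib, ← Finset.prod_pow]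
    rw [hRHS]
    conv_rhs => rw [← Finset.prod_range_reflect]
    refine Finset.prod_le_prod (fun i _ => by positivity) (fun i hi => ?_)
    rw [Finset.mem_range] at hi
    have e1 : 2 * m - (m - 1 - i) = m + 1 + i := by omega
    have e2 : n - (m - 1 - i) = n - m + 1 + i := by omega
    rw [e1, e2]
    have hb : (0:ℝ) < ((n - m + i : ℕ) : ℝ) := by
      have : 0 < n - m + i := by omega
      exact_mod_cast this
    have hd : (0:ℝ) < ((n - m + 1 + i : ℕ) : ℝ) := by
      have : 0 < n - m + 1 + i := by omega
      exact_mod_cast this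
    refine pow_le_pow_left₀ (by positivity) ?_ k
    rw [div_le_div_iff₀ hb hd, ← Nat.cast_mul, ← Nat.cast_mul, Nat.cast_le]
    have h1 : m - 1 + i + 1 ≤ 2 * (n - m + i) := by omega
    nlinarith [Nat.sub_add_cancel hm]
end
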